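/- Let q be a prime power with q ≡ 3 (mod 4), let Q be the Jacobsthal matrix of F_q, let R be the all-ones row vector of length q, and let H be the (q+1)×(q+1) integer block matrix H = [[1, R],[Rᵀ, Q − I]]. Then H is a Hadamard matrix: all entries of H are ±1 and H·Hᵀ = (q+1)·I. -/

import Mathlib

/-!
Let `χ` be the quadratic character and `Q = (χ(v - u))` the Jacobsthal matrix. Its rows sum to
zero, and `Q Qᵀ = q I - J` because the autocorrelation `∑ₓ χ(x) χ(x + a)` is `-1` for `a ≠ 0`:
the substitution `x = -a y` turns it into `χ(-1)` times the Jacobi sum `J(χ, χ) = -χ(-1)`.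
Since `-1` is a non-square when `q ≡ 3 (mod 4)`, `Q` is skew-symmetric, so `S = Q - I` has row
sums `-1` and `S Sᵀ = Q Qᵀ + I = (q + 1) I - J`; these are exactly the conditions under which
bordering `S` with a row and a column of ones yields a Hadamard matrix.
-/

open Matrix Finset

section QuadraticChar

variable {F : Type*} [Field F] [Fintype F]

lemma ringChar_ne_two_of_card_mod_four_eq_three (h3 : Fintype.card F % 4 = 3) :
    ringChar F ≠ 2 := fun h2 => by
  have := FiniteField.even_card_of_char_two h2
  omega

variable [DecidableEq F]

lemma quadraticChar_neg_of_card_mod_four_eq_three (h3 : Fintype.card F % 4 = 3) (a : F) :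
    quadraticChar F (-a) = -quadraticChar F a := by
  have h : quadraticChar F (-1) = -1 := by
    rw [quadraticChar_neg_one_iff_not_isSquare, FiniteField.isSquare_neg_one_iff]
    omega
  rw [neg_eq_neg_one_mul, map_mul, h, neg_one_mul]

lemma quadraticChar_sum_mul_add_of_ne_zero (hF : ringChar F ≠ 2) {a : F} (ha : a ≠ 0) :
    ∑ x : F, quadraticChar F x * quadraticChar F (x + a) = -1 := by
  set χ := quadraticChar F
  have hJ : jacobiSum χ χ = -χ (-1) := by
    simpa only [(quadraticChar_isQuadratic F).inv] using
      jacobiSum_nontrivial_inv (quadraticChar_ne_one hF)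
  -- substitute `x = -a * y`, which turns `x * (x + a)` into `-a ^ 2 * (y * (1 - y))`
  have hsub : ∑ x : F, χ x * χ (x + a) = χ (-1) * jacobiSum χ χ := by
    rw [jacobiSum, mul_sum]
    symm
    refine Fintype.sum_equiv (Equiv.mulLeft₀ (-a) (neg_ne_zero.mpr ha)) _ _ fun y => ?_
    have hy : -a * y + a = a * (1 - y) := by ring
    change _ = χ (-a * y) * χ (-a * y + a)
    rw [hy, neg_eq_neg_one_mul a, map_mul, map_mul, map_mul]
    linear_combination -(χ (-1) * χ y * χ (1 - y)) * quadraticChar_sq_one ha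
  rw [hsub, hJ, mul_neg, ← map_mul, neg_one_mul, neg_neg, map_one]

lemma quadraticChar_sum_mul_add (hF : ringChar F ≠ 2) (a : F) :
    ∑ x : F, quadraticChar F x * quadraticChar F (x + a) =
      if a = 0 then (Fintype.card F : ℤ) - 1 else -1 := by
  split_ifs with ha
  · subst ha
    simp only [add_zero, ← sq]
    rw [← sum_erase_add _ _ (mem_univ 0), quadraticChar_zero, zero_pow two_ne_zero, add_zero,
      sum_congr rfl fun x hx => quadraticChar_sq_one (ne_of_mem_erase hx),
      sum_const, card_erase_of_mem (mem_univ 0), card_univ, nsmul_eq_mul, mul_one,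
      Nat.cast_sub Fintype.card_pos, Nat.cast_one]
  · exact quadraticChar_sum_mul_add_of_ne_zero hF ha

end QuadraticChar

section Jacobsthal

variable (F : Type*) [Field F] [Fintype F] [DecidableEq F]

def jacobsthal : Matrix F F ℤ := of fun u v => quadraticChar F (v - u)

variable {F}

@[simp]
lemma jacobsthal_apply (u v : F) : jacobsthal F u v = quadraticChar F (v - u) := rfl

lemma sum_jacobsthal_apply (hF : ringChar F ≠ 2) (u : F) : ∑ v, jacobsthal F u v = 0 :=
  (Fintype.sum_equiv (Equiv.subRight u) _ _ fun _ => rfl).trans (quadraticChar_sum_zero hF)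

lemma jacobsthal_transpose (h3 : Fintype.card F % 4 = 3) : (jacobsthal F)ᵀ = -jacobsthal F := by
  ext u v
  rw [transpose_apply, neg_apply, jacobsthal_apply, jacobsthal_apply, ← neg_sub,
    quadraticChar_neg_of_card_mod_four_eq_three h3]

lemma jacobsthal_mul_transpose (hF : ringChar F ≠ 2) :
    jacobsthal F * (jacobsthal F)ᵀ = (Fintype.card F : ℤ) • 1 - of fun _ _ => 1 := by
  ext u v
  have hshift : ∑ w, quadraticChar F (w - u) * quadraticChar F (w - v) =
      ∑ x, quadraticChar F x * quadraticChar F (x + (u - v)) :=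
    Fintype.sum_equiv (Equiv.subRight u) _ _ fun w => by simp
  simp only [mul_apply, transpose_apply, jacobsthal_apply, hshift, quadraticChar_sum_mul_add hF,
    Matrix.sub_apply, Matrix.smul_apply, one_apply, of_apply, sub_eq_zero, smul_eq_mul]
  split_ifs <;> simp

lemma jacobsthal_sub_one_mul_transpose (h3 : Fintype.card F % 4 = 3) :
    (jacobsthal F - 1) * (jacobsthal F - 1)ᵀ =
      ((Fintype.card F : ℤ) + 1) • 1 - of fun _ _ => 1 := by
  calc (jacobsthal F - 1) * (jacobsthal F - 1)ᵀ
      = jacobsthal F * (jacobsthal F)ᵀ - (jacobsthal F + (jacobsthal F)ᵀ) + 1 := by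
        simp only [transpose_sub, transpose_one, sub_mul, mul_sub, mul_one, one_mul]
        abel
    _ = ((Fintype.card F : ℤ) + 1) • 1 - of fun _ _ => 1 := by
        rw [jacobsthal_transpose h3, add_neg_cancel, sub_zero, ← jacobsthal_transpose h3,
          jacobsthal_mul_transpose (ringChar_ne_two_of_card_mod_four_eq_three h3), add_smul,
          one_smul]
        abel

lemma sum_jacobsthal_sub_one_apply (hF : ringChar F ≠ 2) (u : F) :
    ∑ v, (jacobsthal F - 1) u v = -1 := by
  simp only [Matrix.sub_apply, sum_sub_distrib, sum_jacobsthal_apply hF, one_apply, sum_ite_eq,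
    mem_univ, if_true, zero_sub]

lemma jacobsthal_sub_one_apply_eq_one_or_neg_one (u v : F) :
    (jacobsthal F - 1) u v = 1 ∨ (jacobsthal F - 1) u v = -1 := by
  rw [Matrix.sub_apply, jacobsthal_apply, one_apply]
  split_ifs with huv
  · simp [huv]
  · simpa using quadraticChar_dichotomy (sub_ne_zero.mpr (Ne.symm huv))

end Jacobsthal

section BorderWithOnes

variable {n R : Type*}

def borderWithOnes [One R] (S : Matrix n n R) : Matrix (Option n) (Option n) R :=
  of fun i j => match i, j with
    | some u, some v => S u v
    | _, _ => 1

lemma borderWithOnes_apply_eq_one_or_neg_one [Ring R] {S : Matrix n n R}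
    (hS : ∀ u v, S u v = 1 ∨ S u v = -1) (i j : Option n) :
    borderWithOnes S i j = 1 ∨ borderWithOnes S i j = -1 := by
  rcases i with _ | u <;> rcases j with _ | v
  all_goals first | exact hS u v | exact Or.inl rfl

lemma borderWithOnes_mul_transpose [Fintype n] [DecidableEq n] [Ring R] (S : Matrix n n R)
    (hrow : ∀ u, ∑ v, S u v = -1)
    (hS : S * Sᵀ = ((Fintype.card n : R) + 1) • 1 - of fun _ _ => 1) :
    borderWithOnes S * (borderWithOnes S)ᵀ = ((Fintype.card n : R) + 1) • 1 := by
  ext (_ | u) (_ | v)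
  all_goals simp only [borderWithOnes, mul_apply, Fintype.sum_option, transpose_apply, of_apply,
    one_mul, mul_one, hrow, Matrix.smul_apply, smul_eq_mul, one_apply, Option.some_inj]
  · simp [add_comm]
  · simp
  · simp
  · have huv := congr_fun₂ hS u v
    simp only [mul_apply, transpose_apply, Matrix.sub_apply, Matrix.smul_apply, smul_eq_mul,
      one_apply, of_apply] at huv
    rw [huv, add_sub_cancel]

end BorderWithOnes

/-- Paley's first construction: for a prime power `q ≡ 3 (mod 4)`, the block matrix
`H = [[1, R],[Rᵀ, Q − I]]` (with `Q` the Jacobsthal matrix of `F_q` and `R` the all-ones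
row) is a Hadamard matrix of order `q + 1`: all entries are `±1` and `H·Hᵀ = (q+1)·I`. -/
theorem paley_hadamard_type_I {F : Type*} [Field F] [Fintype F] [DecidableEq F]
    (h3 : Fintype.card F % 4 = 3)
    (H : Matrix (Option F) (Option F) ℤ)
    (hH : ∀ i j : Option F, H i j =
      match i, j with
      | none, _ => 1
      | some _, none => 1
      | some u, some v => quadraticChar F (v - u) - (if u = v then 1 else 0)) :
    (∀ i j : Option F, H i j = 1 ∨ H i j = -1) ∧
      H * Hᵀ = ((Fintype.card F : ℤ) + 1) • (1 : Matrix (Option F) (Option F) ℤ) := by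
  obtain rfl : H = borderWithOnes (jacobsthal F - 1) := by
    ext (_ | u) (_ | v) <;> simp [hH, borderWithOnes, one_apply]
  refine ⟨borderWithOnes_apply_eq_one_or_neg_one jacobsthal_sub_one_apply_eq_one_or_neg_one,
    borderWithOnes_mul_transpose _
      (sum_jacobsthal_sub_one_apply (ringChar_ne_two_of_card_mod_four_eq_three h3))
      (jacobsthal_sub_one_mul_transpose h3)⟩
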